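/- Let f : D → {0,1} be a partial Boolean function with D ⊆ {0,1}^M and let d ≥ 0 be an integer. The threshold degree of f exceeds d if and only if there exists a function ψ : {0,1}^M → ℝ such that: (1) ψ(x) = 0 for every x ∉ D; (2) ψ has pure high degree d; (3) ψ(x) ≥ 0 whenever f(x) = 1 and ψ(x) ≤ 0 whenever f(x) = 0; and (4) ‖ψ‖₁ > 0. -/

import Mathlib

open MvPolynomial
open scoped Classical

noncomputable section

/-- The real value of a Boolean: `1` for `true`, `0` for `false`. -/
def bval (b : Bool) : ℝ := if b then 1 else 0

/-- Evaluation of a real multilinear polynomial at a Boolean point of `{0,1}^σ`. -/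
def pEval {σ : Type*} (p : MvPolynomial σ ℝ) (x : σ → Bool) : ℝ :=
  MvPolynomial.eval (fun i => bval (x i)) p

/-- `p` sign-represents the partial Boolean function `f` with domain `D`. -/
def SignRep {σ : Type*} (D : Set (σ → Bool)) (f : (σ → Bool) → Bool)
    (p : MvPolynomial σ ℝ) : Prop :=
  ∀ x ∈ D, (f x = true → 0 < pEval p x) ∧ (f x = false → pEval p x < 0)

/-- The threshold degree of the partial Boolean function `f` with domain `D`. -/
noncomputable def thrDeg {σ : Type*} (D : Set (σ → Bool)) (f : (σ → Bool) → Bool) : ℕ :=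
  sInf {d | ∃ p : MvPolynomial σ ℝ, SignRep D f p ∧ p.totalDegree = d}

/-- `ψ` has pure high degree `d`: it is orthogonal to every polynomial of degree at most `d`. -/
def PureHighDeg {σ : Type*} [Fintype σ] [DecidableEq σ] (d : ℕ)
    (ψ : (σ → Bool) → ℝ) : Prop :=
  ∀ p : MvPolynomial σ ℝ, p.totalDegree ≤ d → ∑ x : σ → Bool, ψ x * pEval p x = 0

/-!
A polynomial `p` of degree `≤ d` sign-represents `f` iff the vector `x ↦ ±p(x)` (sign `+` where
`f x` is true) is positive on `D`. These vectors form a subspace `V` of `ℝ^{0,1}^M`, and by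
Gordan's alternative (separate `V` from the open orthant over `D` by Hahn–Banach) no such `p`
exists iff some nonzero `y ≥ 0` supported on `D` is orthogonal to `V`; then `ψ = ±y` is the dual
witness. Conversely, against such a `ψ` every term of `∑ ψ x p(x)` is `≥ 0` and one is `> 0`,
contradicting pure high degree.
-/

lemma nonpos_of_forall_add_mul_neg {a c : ℝ} (h : ∀ t : ℝ, 0 ≤ t → a + t * c < 0) : c ≤ 0 := by
  by_contra! hc
  have := h (|a| / c) (by positivity)
  rw [div_mul_cancel₀ _ hc.ne'] at this
  linarith [neg_abs_le a]

lemma sum_abs_pos_iff {ι : Type*} [Fintype ι] {ψ : ι → ℝ} : 0 < ∑ i, |ψ i| ↔ ψ ≠ 0 := by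
  rw [Finset.sum_pos_iff_of_nonneg fun _ _ => abs_nonneg _, Ne, _root_.funext_iff]
  simp

/-- Gordan's alternative. -/
theorem exists_nonneg_ne_zero_orthogonal_of_not_exists_pos {ι : Type*} [Fintype ι]
    [DecidableEq ι] (S : Set ι) (V : Submodule ℝ (ι → ℝ))
    (hV : ¬ ∃ v ∈ V, ∀ i ∈ S, 0 < v i) :
    ∃ y : ι → ℝ, y ≠ 0 ∧ (∀ i, 0 ≤ y i) ∧ (∀ i ∉ S, y i = 0) ∧
      ∀ v ∈ V, ∑ i, y i * v i = 0 := by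
  set P : Set (ι → ℝ) := S.pi fun _ => Set.Ioi 0
  have hPV : Disjoint P V := Set.disjoint_left.2 fun v hvP hvV => hV ⟨v, hvV, hvP⟩
  obtain ⟨g, u, hgP, hgV⟩ := geometric_hahn_banach_open
    (convex_pi fun _ _ => convex_Ioi 0) (isOpen_set_pi S.toFinite fun _ _ => isOpen_Ioi)
    V.convex hPV
  -- a functional bounded below on a subspace vanishes on it
  have hg_V : ∀ v ∈ V, g v = 0 := by
    intro v hv
    by_contra hne
    have := hgV (((u - 1) / g v) • v) (V.smul_mem _ hv)
    rw [map_smul, smul_eq_mul, div_mul_cancel₀ _ hne] at this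
    linarith
  have hu : u ≤ 0 := by simpa using hgV 0 V.zero_mem
  set e : ι → ι → ℝ := fun i j => if i = j then 1 else 0
  have hg_sum : ∀ v, g v = ∑ i, v i * g (e i) := fun v => by
    simpa using (g : (ι → ℝ) →ₗ[ℝ] ℝ).pi_apply_eq_sum_univ v
  -- `g < 0` on `P`; testing it at `1_S + t • e i` bounds the signs of the coefficients `g (e i)`
  have h_shift : ∀ i t, (i ∈ S → 0 ≤ t) → g (S.indicator 1) + t * g (e i) < 0 := by
    intro i t ht
    have hmem : S.indicator 1 + t • e i ∈ P := by
      intro j hj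
      by_cases hij : i = j
      · subst hij; simp [e, hj]; linarith [ht hj]
      · simp [e, hj, hij]
    simpa [map_add, map_smul] using (hgP _ hmem).trans_le hu
  have hle : ∀ i, g (e i) ≤ 0 := fun i =>
    nonpos_of_forall_add_mul_neg fun t ht => h_shift i t fun _ => ht
  refine ⟨fun i => -g (e i), ?_, fun i => neg_nonneg.2 (hle i), ?_, ?_⟩
  · intro h0
    have hone : g (S.indicator 1) < 0 := (hgP _ fun i _ => by simp [*]).trans_le hu
    have hzero : ∀ i, g (e i) = 0 := fun i => neg_eq_zero.1 (congrFun h0 i)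
    rw [hg_sum] at hone
    simp [hzero] at hone
  · intro i hi
    have hge : 0 ≤ g (e i) := by
      have := nonpos_of_forall_add_mul_neg (c := -g (e i)) fun t _ => by
        simpa using h_shift i (-t) fun h => absurd h hi
      linarith
    simp [le_antisymm (hle i) hge]
  · intro v hv
    simp only [neg_mul, Finset.sum_neg_distrib, neg_eq_zero]
    rw [← hg_V v hv, hg_sum v]
    simp_rw [mul_comm]

def boolSign (b : Bool) : ℝ := if b then 1 else -1

lemma abs_boolSign (b : Bool) : |boolSign b| = 1 := by
  cases b <;> simp [boolSign]

lemma boolSign_ne_zero (b : Bool) : boolSign b ≠ 0 := by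
  cases b <;> simp [boolSign]

lemma boolSign_mul_self (b : Bool) : boolSign b * boolSign b = 1 := by
  cases b <;> simp [boolSign]

lemma pos_and_neg_iff_boolSign_mul_pos (b : Bool) (a : ℝ) :
    ((b = true → 0 < a) ∧ (b = false → a < 0)) ↔ 0 < boolSign b * a := by
  cases b <;> simp [boolSign]

lemma nonneg_and_nonpos_iff_boolSign_mul_nonneg (b : Bool) (a : ℝ) :
    ((b = true → 0 ≤ a) ∧ (b = false → a ≤ 0)) ↔ 0 ≤ boolSign b * a := by
  cases b <;> simp [boolSign]

lemma signRep_iff {σ : Type*} {D : Set (σ → Bool)} {f : (σ → Bool) → Bool}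
    {p : MvPolynomial σ ℝ} : SignRep D f p ↔ ∀ x ∈ D, 0 < boolSign (f x) * pEval p x := by
  simp only [SignRep, pos_and_neg_iff_boolSign_mul_pos]

section ThresholdDegree

variable {σ : Type*} [Fintype σ] {D : Set (σ → Bool)} {f : (σ → Bool) → Bool}

def pointIndicator (y : σ → Bool) : MvPolynomial σ ℝ :=
  ∏ i, if y i then X i else 1 - X i

lemma pEval_pointIndicator (y x : σ → Bool) :
    pEval (pointIndicator y) x = if x = y then 1 else 0 := by
  have hfactor : ∀ i, eval (fun i => bval (x i)) (if y i then X i else 1 - X i)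
      = if x i = y i then 1 else 0 := by
    intro i
    cases y i <;> cases hx : x i <;> simp [hx, bval]
  simp only [pEval, pointIndicator, map_prod, hfactor, Finset.prod_boole, Finset.mem_univ,
    forall_const]
  exact if_congr _root_.funext_iff.symm rfl rfl

lemma exists_signRep (D : Set (σ → Bool)) (f : (σ → Bool) → Bool) :
    ∃ p : MvPolynomial σ ℝ, SignRep D f p := by
  refine ⟨∑ y, C (boolSign (f y)) * pointIndicator y, signRep_iff.2 fun x _ => ?_⟩
  have hval : pEval (∑ y, C (boolSign (f y)) * pointIndicator y) x = boolSign (f x) := by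
    have hpoint : ∀ y, eval (fun i => bval (x i)) (pointIndicator y) = if x = y then 1 else 0 :=
      fun y => pEval_pointIndicator y x
    simp [pEval, hpoint]
  rw [hval, ← sq, ← sq_abs, abs_boolSign, one_pow]
  exact one_pos

lemma lt_thrDeg_iff {d : ℕ} :
    d < thrDeg D f ↔ ∀ p : MvPolynomial σ ℝ, p.totalDegree ≤ d → ¬ SignRep D f p := by
  constructor
  · intro hd p hpd hp
    have hle : thrDeg D f ≤ p.totalDegree := Nat.sInf_le ⟨p, hp, rfl⟩
    exact hle.not_gt (hpd.trans_lt hd)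
  · intro h
    obtain ⟨p, hp⟩ := exists_signRep D f
    have hne : {e | ∃ p : MvPolynomial σ ℝ, SignRep D f p ∧ p.totalDegree = e}.Nonempty :=
      ⟨_, p, hp, rfl⟩
    obtain ⟨q, hq, hqdeg⟩ := Nat.sInf_mem hne
    by_contra! hle
    exact h q (hqdeg.trans_le hle) hq

def signedEval (f : (σ → Bool) → Bool) : MvPolynomial σ ℝ →ₗ[ℝ] (σ → Bool) → ℝ :=
  LinearMap.pi fun x => boolSign (f x) • (aeval fun i => bval (x i)).toLinearMap

omit [Fintype σ] in
lemma signedEval_apply (p : MvPolynomial σ ℝ) (x : σ → Bool) :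
    signedEval f p x = boolSign (f x) * pEval p x := by
  simp [signedEval, pEval]

variable [DecidableEq σ] {d : ℕ} {ψ : (σ → Bool) → ℝ}

lemma not_signRep_of_pureHighDeg (hD : ∀ x, x ∉ D → ψ x = 0) (hψ : PureHighDeg d ψ)
    (hsign : ∀ x ∈ D, 0 ≤ boolSign (f x) * ψ x) (hne : ψ ≠ 0)
    {p : MvPolynomial σ ℝ} (hpd : p.totalDegree ≤ d) : ¬ SignRep D f p := by
  intro hp
  rw [signRep_iff] at hp
  have hterm : ∀ x, ψ x * pEval p x = (boolSign (f x) * ψ x) * (boolSign (f x) * pEval p x) :=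
    fun x => by linear_combination (-(ψ x * pEval p x)) * boolSign_mul_self (f x)
  have hnonneg : ∀ x ∈ Finset.univ, 0 ≤ ψ x * pEval p x := by
    intro x _
    by_cases hx : x ∈ D
    · rw [hterm]; exact mul_nonneg (hsign x hx) (hp x hx).le
    · simp [hD x hx]
  obtain ⟨x₀, hx₀⟩ := Function.ne_iff.1 hne
  have hx₀D : x₀ ∈ D := by_contra fun h => hx₀ (hD x₀ h)
  have hpos : 0 < ψ x₀ * pEval p x₀ := by
    rw [hterm]
    exact mul_pos ((hsign x₀ hx₀D).lt_of_ne (mul_ne_zero (boolSign_ne_zero _) hx₀).symm)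
      (hp x₀ hx₀D)
  exact (Finset.sum_pos' hnonneg ⟨x₀, Finset.mem_univ _, hpos⟩).ne' (hψ p hpd)

lemma exists_pureHighDeg_of_lt_thrDeg (h : d < thrDeg D f) :
    ∃ ψ : (σ → Bool) → ℝ, (∀ x, x ∉ D → ψ x = 0) ∧ PureHighDeg d ψ ∧
      (∀ x ∈ D, 0 ≤ boolSign (f x) * ψ x) ∧ ψ ≠ 0 := by
  have hV : ¬ ∃ v ∈ (restrictTotalDegree σ ℝ d).map (signedEval f), ∀ x ∈ D, 0 < v x := by
    rintro ⟨_, ⟨p, hp, rfl⟩, hpos⟩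
    refine lt_thrDeg_iff.1 h p ((mem_restrictTotalDegree σ d p).1 hp)
      (signRep_iff.2 fun x hx => ?_)
    simpa [signedEval_apply] using hpos x hx
  obtain ⟨y, hy0, hy_nonneg, hyD, hy_orth⟩ :=
    exists_nonneg_ne_zero_orthogonal_of_not_exists_pos D _ hV
  refine ⟨fun x => boolSign (f x) * y x, fun x hx => by simp [hyD x hx], ?_, ?_, ?_⟩
  · intro p hp
    rw [← hy_orth _ (Submodule.mem_map_of_mem ((mem_restrictTotalDegree σ d p).2 hp))]
    refine Finset.sum_congr rfl fun x _ => ?_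
    rw [signedEval_apply]; ring
  · intro x _
    rw [← mul_assoc, boolSign_mul_self, one_mul]
    exact hy_nonneg x
  · intro hψ
    exact hy0 (funext fun x => (mul_eq_zero.1 (congrFun hψ x)).resolve_left (boolSign_ne_zero _))

end ThresholdDegree

theorem stmt5 (M : ℕ) (D : Set (Fin M → Bool)) (f : (Fin M → Bool) → Bool) (d : ℕ) :
    d < thrDeg D f ↔
      ∃ ψ : (Fin M → Bool) → ℝ,
        (∀ x, x ∉ D → ψ x = 0) ∧
        PureHighDeg d ψ ∧
        (∀ x ∈ D, (f x = true → 0 ≤ ψ x) ∧ (f x = false → ψ x ≤ 0)) ∧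
        0 < ∑ x : Fin M → Bool, |ψ x| := by
  simp only [nonneg_and_nonpos_iff_boolSign_mul_nonneg, sum_abs_pos_iff]
  refine ⟨exists_pureHighDeg_of_lt_thrDeg, ?_⟩
  rintro ⟨ψ, hD, hψ, hsign, hne⟩
  exact lt_thrDeg_iff.2 fun p hpd => not_signRep_of_pureHighDeg hD hψ hsign hne hpd
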